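/- Let α = (√3 − 1)/2 and β = √3/3. For every positive integer n: if the canonical K-representation of n has last (least significant) digit 1, then g_n = 2·⌊αn⌋ + 1; if the last digit is 0 or 2, then g_n = 2·⌊αn + β⌋. -/

import Mathlib

/-
For a digit string `a = a₀ a₁ a₂ …` (least significant digit first) put
`G(a) = a₀ + 2 ∑_{i ≥ 1} aᵢ 𝒦ᵢ₋₁` (`gDigits`). For every expansion `n = ∑ aᵢ 𝒦ᵢ` with digits in
{0,1,2}, canonical or not, `g n = G(a)`, by strong induction on `n`: if `a = 0ᵏ (c+1) r`, then
`n - 1` has the expansion `(1 2)^{k/2} c r`, preceded by one more digit `2` when `k` is odd;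
applying the induction hypothesis to it and then to `g (n - 1) / 2` gives
`g (g (n - 1) / 2) = G(a₁ a₂ …)`, and `n - G(a₁ a₂ …) = G(a)` because
`∑ aᵢ 𝒦ᵢ₊₁ = 2 ∑ aᵢ 𝒦ᵢ + G(a)`.

Since `α = (√3 - 1) / 2 = 1 / (1 + √3)`, the sequence `α 𝒦ᵢ₊₁ - 𝒦ᵢ` is geometric of ratio
`1 - √3`. Hence the `defect` `α ∑ aᵢ 𝒦ᵢ₊₁ - ∑ aᵢ 𝒦ᵢ` of a string with digits at most 2 stays in
`(2 - 4√3/3, 1 - √3/3)`, an interval short enough to pin down `⌊α n⌋` and `⌊α n + β⌋`.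
-/

open Finset

/-- The sequence 𝒦 with 𝒦₀ = 1, 𝒦₁ = 3, 𝒦ₙ = 2𝒦ₙ₋₁ + 2𝒦ₙ₋₂. -/
def Kcal : ℕ → ℕ
  | 0 => 1
  | 1 => 3
  | (n + 2) => 2 * Kcal (n + 1) + 2 * Kcal n

/-- For a digit string `a_t ⋯ a_0` given as the list `l = [a_0, a_1, …, a_t]`
(least significant digit first), its value `∑ a_i 𝒦_i`. -/
def valK (l : List ℕ) : ℕ := ∑ i ∈ Finset.range l.length, l.getD i 0 * Kcal i

/-- `l = [a_0, a_1, …, a_t]` is a canonical digit string: all digits in {0,1,2},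
leading digit `a_t` nonzero, and no index `i` with `a_{i+1} = a_i = 2`. -/
def GoodRep (l : List ℕ) : Prop :=
  (∀ d ∈ l, d ≤ 2) ∧ (l.getLast? ≠ some 0) ∧
    ∀ i : ℕ, ¬ (l.getD i 0 = 2 ∧ l.getD (i + 1) 0 = 2)

open List

theorem Kcal_add_two (i : ℕ) : Kcal (i + 2) = 2 * Kcal (i + 1) + 2 * Kcal i := rfl

@[simp] theorem Kcal_zero : Kcal 0 = 1 := rfl

@[simp] theorem Kcal_one : Kcal 1 = 3 := rfl

@[simp] theorem Kcal_two : Kcal 2 = 8 := rfl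

def valKFrom : ℕ → List ℕ → ℕ
  | _, [] => 0
  | j, b :: l => b * Kcal j + valKFrom (j + 1) l

@[simp] theorem valKFrom_nil (j : ℕ) : valKFrom j [] = 0 := rfl

@[simp] theorem valKFrom_cons (j b : ℕ) (l : List ℕ) :
    valKFrom j (b :: l) = b * Kcal j + valKFrom (j + 1) l := rfl

theorem valKFrom_eq_sum (l : List ℕ) (j : ℕ) :
    valKFrom j l = ∑ i ∈ range l.length, l.getD i 0 * Kcal (j + i) := by
  induction l generalizing j with
  | nil => simp
  | cons b l ih =>
    rw [length_cons, Finset.sum_range_succ', valKFrom_cons, ih, add_comm]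
    simp only [getD_cons_succ, getD_cons_zero, add_zero, add_assoc, add_comm 1]

theorem valK_eq_valKFrom (l : List ℕ) : valK l = valKFrom 0 l := by
  simp [valK, valKFrom_eq_sum]

theorem valKFrom_add_two (l : List ℕ) (j : ℕ) :
    valKFrom (j + 2) l = 2 * valKFrom (j + 1) l + 2 * valKFrom j l := by
  induction l generalizing j with
  | nil => rfl
  | cons b l ih => simp only [valKFrom_cons, Kcal_add_two, ih (j + 1)]; ring

theorem valKFrom_append (u v : List ℕ) (j : ℕ) :
    valKFrom j (u ++ v) = valKFrom j u + valKFrom (j + u.length) v := by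
  induction u generalizing j with
  | nil => simp
  | cons b u ih => simp only [cons_append, valKFrom_cons, ih, length_cons]; ring_nf

theorem valKFrom_replicate_zero_append (k : ℕ) (l : List ℕ) (j : ℕ) :
    valKFrom j (replicate k 0 ++ l) = valKFrom (j + k) l := by
  induction k generalizing j with
  | zero => rfl
  | succ k ih => simp [replicate_succ, ih, add_right_comm, add_assoc]

theorem exists_eq_replicate_zero_append {l : List ℕ} {j : ℕ} (h : valKFrom j l ≠ 0) :
    ∃ k c r, l = replicate k 0 ++ (c + 1) :: r := by
  induction l generalizing j with
  | nil => simp at h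
  | cons b l ih =>
    cases b with
    | zero =>
      obtain ⟨k, c, r, rfl⟩ := ih (by simpa using h)
      exact ⟨k + 1, c, r, rfl⟩
    | succ c => exact ⟨0, c, l, rfl⟩

def gDigits : List ℕ → ℕ
  | [] => 0
  | b :: l => 2 * valKFrom 0 l + b

@[simp] theorem gDigits_cons (b : ℕ) (l : List ℕ) : gDigits (b :: l) = 2 * valKFrom 0 l + b := rfl

theorem valKFrom_one (l : List ℕ) : valKFrom 1 l = 2 * valKFrom 0 l + gDigits l := by
  cases l with
  | nil => rfl
  | cons b l =>
    simp only [valKFrom_cons, gDigits_cons, Kcal_zero, Kcal_one, zero_add, valKFrom_add_two l 0]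
    ring

theorem gDigits_le (l : List ℕ) : gDigits l ≤ valKFrom 0 l := by
  cases l with
  | nil => rfl
  | cons b l =>
    simp only [valKFrom_cons, gDigits_cons, Kcal_zero, valKFrom_one l]
    omega

def altDigits : ℕ → List ℕ
  | 0 => []
  | i + 1 => 1 :: 2 :: altDigits i

theorem altDigits_append_le_two {i c : ℕ} {r : List ℕ} (hc : c ≤ 2) (hr : ∀ d ∈ r, d ≤ 2) :
    ∀ d ∈ altDigits i ++ c :: r, d ≤ 2 := by
  induction i with
  | zero => exact forall_mem_cons.2 ⟨hc, hr⟩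
  | succ i ih => exact forall_mem_cons.2 ⟨by norm_num, forall_mem_cons.2 ⟨by norm_num, ih⟩⟩

@[simp] theorem length_altDigits (i : ℕ) : (altDigits i).length = 2 * i := by
  induction i with
  | zero => rfl
  | succ i ih => rw [altDigits, length_cons, length_cons, ih]; ring

theorem valKFrom_altDigits (i j : ℕ) : valKFrom j (altDigits i) + Kcal j = Kcal (j + 2 * i) := by
  induction i generalizing j with
  | zero => simp [altDigits]
  | succ i ih =>
    have := ih (j + 2)
    rw [show j + 2 + 2 * i = j + 2 * (i + 1) by ring, Kcal_add_two] at this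
    simp only [altDigits, valKFrom_cons, Nat.add_assoc, Nat.reduceAdd] at this ⊢
    omega

theorem valKFrom_altDigits_append (i j c : ℕ) (r : List ℕ) :
    valKFrom j (altDigits i ++ c :: r) + Kcal j =
      valKFrom j (replicate (2 * i) 0 ++ (c + 1) :: r) := by
  have h := valKFrom_altDigits i j
  rw [valKFrom_append, valKFrom_replicate_zero_append, length_altDigits]
  simp only [valKFrom_cons]
  linarith

section Gutkovskiy

variable {g : ℕ → ℕ}

theorem g_le_self (hg0 : g 0 = 0) (hg : ∀ n : ℕ, 1 ≤ n → g n = n - g (g (n - 1) / 2)) (n : ℕ) :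
    g n ≤ n := by
  cases n with
  | zero => rw [hg0]
  | succ n => rw [hg _ n.succ_pos]; exact Nat.sub_le _ _

theorem g_valKFrom_cons_of_g_g_sub_one_div_two
    (hg : ∀ n : ℕ, 1 ≤ n → g n = n - g (g (n - 1) / 2))
    {b : ℕ} {x : List ℕ} (hpos : valKFrom 0 (b :: x) ≠ 0)
    (h : g (g (valKFrom 0 (b :: x) - 1) / 2) = gDigits x) :
    g (valKFrom 0 (b :: x)) = gDigits (b :: x) := by
  have := valKFrom_one x
  rw [hg _ (Nat.one_le_iff_ne_zero.mpr hpos), h]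
  simp only [valKFrom_cons, gDigits_cons, Kcal_zero, zero_add] at this ⊢
  omega

theorem g_g_sub_one_div_two_eq (hg0 : g 0 = 0)
    (hg : ∀ n : ℕ, 1 ≤ n → g n = n - g (g (n - 1) / 2)) {n : ℕ}
    (ih : ∀ l, (∀ d ∈ l, d ≤ 2) → valKFrom 0 l < n → g (valKFrom 0 l) = gDigits l)
    {p q : List ℕ} (hp : ∀ d ∈ p, d ≤ 2) (hpn : valKFrom 0 p + 1 = n)
    (hq : ∀ d ∈ q, d ≤ 2) (hpq : gDigits p / 2 = valKFrom 0 q) :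
    g (g (n - 1) / 2) = gDigits q := by
  have hpred : g (n - 1) = gDigits p := by
    rw [← hpn, Nat.add_sub_cancel]
    exact ih p hp (by omega)
  have hle := g_le_self hg0 hg (n - 1)
  rw [hpred] at hle ⊢
  rw [hpq]
  exact ih q hq (by omega)

theorem g_g_sub_one_div_two_cons_succ (hg0 : g 0 = 0)
    (hg : ∀ n : ℕ, 1 ≤ n → g n = n - g (g (n - 1) / 2)) {c : ℕ} {r : List ℕ}
    (ih : ∀ l, (∀ d ∈ l, d ≤ 2) → valKFrom 0 l < valKFrom 0 ((c + 1) :: r) →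
      g (valKFrom 0 l) = gDigits l)
    (hc : c ≤ 1) (hr : ∀ d ∈ r, d ≤ 2) :
    g (g (valKFrom 0 ((c + 1) :: r) - 1) / 2) = gDigits r := by
  refine g_g_sub_one_div_two_eq hg0 hg ih (p := c :: r) (forall_mem_cons.2 ⟨by omega, hr⟩) ?_ hr ?_
  · simp only [valKFrom_cons, Kcal_zero]
    ring
  · simp only [gDigits_cons]
    omega

theorem g_g_sub_one_div_two_zero_cons (hg0 : g 0 = 0)
    (hg : ∀ n : ℕ, 1 ≤ n → g n = n - g (g (n - 1) / 2)) {i c : ℕ} {r : List ℕ}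
    (ih : ∀ l, (∀ d ∈ l, d ≤ 2) →
      valKFrom 0 l < valKFrom 0 (0 :: (replicate (2 * i) 0 ++ (c + 1) :: r)) →
      g (valKFrom 0 l) = gDigits l)
    (hc : c ≤ 1) (hr : ∀ d ∈ r, d ≤ 2) :
    g (g (valKFrom 0 (0 :: (replicate (2 * i) 0 ++ (c + 1) :: r)) - 1) / 2) =
      gDigits (replicate (2 * i) 0 ++ (c + 1) :: r) := by
  have hv0 := valKFrom_altDigits_append i 0 c r
  have hv1 := valKFrom_altDigits_append i 1 c r
  refine g_g_sub_one_div_two_eq hg0 hg ih (p := 2 :: (altDigits i ++ c :: r))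
    (forall_mem_cons.2 ⟨by norm_num, altDigits_append_le_two (by omega) hr⟩) ?_ ?_ ?_
  · simp only [valKFrom_cons, Kcal_zero, Kcal_one, zero_add] at hv1 ⊢
    omega
  · exact forall_mem_append.2 ⟨fun d hd => by rw [eq_of_mem_replicate hd]; omega,
      forall_mem_cons.2 ⟨by omega, hr⟩⟩
  · simp only [gDigits_cons, Kcal_zero] at hv0 ⊢
    omega

theorem g_g_sub_one_div_two_zero_zero_cons (hg0 : g 0 = 0)
    (hg : ∀ n : ℕ, 1 ≤ n → g n = n - g (g (n - 1) / 2)) {i c : ℕ} {r : List ℕ}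
    (ih : ∀ l, (∀ d ∈ l, d ≤ 2) →
      valKFrom 0 l < valKFrom 0 (0 :: 0 :: (replicate (2 * i) 0 ++ (c + 1) :: r)) →
      g (valKFrom 0 l) = gDigits l)
    (hc : c ≤ 1) (hr : ∀ d ∈ r, d ≤ 2) :
    g (g (valKFrom 0 (0 :: 0 :: (replicate (2 * i) 0 ++ (c + 1) :: r)) - 1) / 2) =
      gDigits (0 :: (replicate (2 * i) 0 ++ (c + 1) :: r)) := by
  have hv0 := valKFrom_altDigits_append i 0 c r
  have hv2 := valKFrom_altDigits_append i 2 c r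
  have hp : ∀ d ∈ altDigits i ++ c :: r, d ≤ 2 := altDigits_append_le_two (by omega) hr
  rw [g_g_sub_one_div_two_eq hg0 hg ih (p := 1 :: 2 :: (altDigits i ++ c :: r))
    (q := 2 :: (altDigits i ++ c :: r))
    (forall_mem_cons.2 ⟨by norm_num, forall_mem_cons.2 ⟨by norm_num, hp⟩⟩) ?_
    (forall_mem_cons.2 ⟨by norm_num, hp⟩) ?_]
  · simp only [gDigits_cons, Kcal_zero] at hv0 ⊢
    omega
  · simp only [valKFrom_cons, Kcal_zero, Kcal_one, Kcal_two, zero_add, Nat.reduceAdd] at hv2 ⊢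
    omega
  · simp only [gDigits_cons, valKFrom_cons, Kcal_zero]
    omega

theorem g_valKFrom_eq_gDigits (hg0 : g 0 = 0)
    (hg : ∀ n : ℕ, 1 ≤ n → g n = n - g (g (n - 1) / 2)) (l : List ℕ) (hl : ∀ d ∈ l, d ≤ 2) :
    g (valKFrom 0 l) = gDigits l := by
  induction hn : valKFrom 0 l using Nat.strong_induction_on generalizing l with
  | _ n ih =>
  replace ih : ∀ l', (∀ d ∈ l', d ≤ 2) → valKFrom 0 l' < n → g (valKFrom 0 l') = gDigits l' :=
    fun l' hl' hlt => ih _ hlt l' hl' rfl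
  subst hn
  rcases Nat.eq_zero_or_pos (valKFrom 0 l) with h0 | hpos
  · have := gDigits_le l
    rw [h0, hg0]
    omega
  obtain ⟨k, c, r, rfl⟩ := exists_eq_replicate_zero_append hpos.ne'
  have hc : c ≤ 1 := by have := hl (c + 1) (by simp); omega
  have hr : ∀ d ∈ r, d ≤ 2 := fun d hd => hl d (by simp [hd])
  obtain ⟨i, rfl | rfl⟩ := Nat.even_or_odd' k
  · rcases i with _ | i
    · exact g_valKFrom_cons_of_g_g_sub_one_div_two hg hpos.ne'
        (g_g_sub_one_div_two_cons_succ hg0 hg ih hc hr)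
    · rw [show 2 * (i + 1) = 2 * i + 1 + 1 by ring, replicate_succ, replicate_succ,
        cons_append, cons_append] at *
      exact g_valKFrom_cons_of_g_g_sub_one_div_two hg hpos.ne'
        (g_g_sub_one_div_two_zero_zero_cons hg0 hg ih hc hr)
  · rw [replicate_succ, cons_append] at *
    exact g_valKFrom_cons_of_g_g_sub_one_div_two hg hpos.ne'
      (g_g_sub_one_div_two_zero_cons hg0 hg ih hc hr)

end Gutkovskiy

theorem sqrt_three_bounds : 1.7 < √3 ∧ √3 < 1.8 := by
  constructor
  · rw [Real.lt_sqrt (by norm_num)]; norm_num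
  · rw [Real.sqrt_lt' (by norm_num)]; norm_num

noncomputable def defect (l : List ℕ) : ℝ := (√3 - 1) / 2 * valKFrom 1 l - valKFrom 0 l

theorem defect_cons (b : ℕ) (l : List ℕ) :
    defect (b :: l) = b * ((3 * √3 - 5) / 2) + (1 - √3) * defect l := by
  have h3 : √3 ^ 2 = 3 := Real.sq_sqrt (by norm_num)
  have h2 : (valKFrom 2 l : ℝ) = 2 * valKFrom 1 l + 2 * valKFrom 0 l := by
    exact_mod_cast valKFrom_add_two l 0
  simp only [defect, valKFrom_cons, Kcal_zero, Kcal_one, zero_add, Nat.reduceAdd]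
  push_cast
  rw [h2]
  linear_combination (valKFrom 1 l / 2 : ℝ) * h3

theorem defect_mem_Ioo {l : List ℕ} (hl : ∀ d ∈ l, d ≤ 2) :
    defect l ∈ Set.Ioo (2 - 4 * √3 / 3) (1 - √3 / 3) := by
  obtain ⟨hsqrt_lo, hsqrt_hi⟩ := sqrt_three_bounds
  induction l with
  | nil =>
    rw [Set.mem_Ioo, show defect [] = 0 by simp [defect]]
    constructor <;> linarith
  | cons b l ih =>
    obtain ⟨hb, hl⟩ := forall_mem_cons.1 hl
    obtain ⟨hlo, hhi⟩ := ih hl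
    have h3 : √3 ^ 2 = 3 := Real.sq_sqrt (by norm_num)
    have hneg : 1 - √3 < 0 := by linarith
    have hc : 0 ≤ (3 * √3 - 5) / 2 := by linarith
    have hb' : (b : ℝ) * ((3 * √3 - 5) / 2) ≤ 2 * ((3 * √3 - 5) / 2) :=
      mul_le_mul_of_nonneg_right (by exact_mod_cast hb) hc
    have hlo' := mul_lt_mul_of_neg_left hhi hneg
    have hhi' := mul_lt_mul_of_neg_left hlo hneg
    rw [defect_cons]
    constructor <;> nlinarith [mul_nonneg b.cast_nonneg hc]

/-- Closed form for Gutkovskiy's sequence: with `α = (√3 − 1)/2` and `β = √3/3`,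
if the canonical K-representation of `n ≥ 1` has least significant digit `a`
(so it is the list `a :: x` least-significant-first), then `g_n = 2⌊αn⌋ + 1`
if `a = 1`, and `g_n = 2⌊αn + β⌋` if `a = 0` or `a = 2`. -/
theorem gut_closed_form (g : ℕ → ℕ)
    (hg0 : g 0 = 0) (hg : ∀ n : ℕ, 1 ≤ n → g n = n - g (g (n - 1) / 2)) :
    ∀ (n a : ℕ) (x : List ℕ), 1 ≤ n → GoodRep (a :: x) → valK (a :: x) = n →
      (a = 1 → (g n : ℤ) = 2 * ⌊((Real.sqrt 3 - 1) / 2) * (n : ℝ)⌋ + 1) ∧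
      ((a = 0 ∨ a = 2) →
        (g n : ℤ) = 2 * ⌊((Real.sqrt 3 - 1) / 2) * (n : ℝ) + Real.sqrt 3 / 3⌋) := by
  rintro n a x - ⟨hdigits, -, -⟩ rfl
  have hgn : (g (valK (a :: x)) : ℤ) = 2 * valKFrom 0 x + a := by
    rw [valK_eq_valKFrom, g_valKFrom_eq_gDigits hg0 hg _ hdigits]
    push_cast [gDigits_cons]
    ring
  have hn : ((√3 - 1) / 2) * (valK (a :: x) : ℝ) = (√3 - 1) / 2 * a + defect x + valKFrom 0 x := by
    rw [valK_eq_valKFrom, defect]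
    push_cast [valKFrom_cons, Kcal_zero, zero_add]
    ring
  obtain ⟨hlo, hhi⟩ := defect_mem_Ioo (forall_mem_cons.1 hdigits).2
  obtain ⟨hsqrt_lo, hsqrt_hi⟩ := sqrt_three_bounds
  rw [hgn, hn]
  constructor
  · rintro rfl
    rw [(Int.floor_eq_iff (z := (valKFrom 0 x : ℤ))).2]
    · ring
    · push_cast; constructor <;> linarith
  · rintro (rfl | rfl)
    · rw [(Int.floor_eq_iff (z := (valKFrom 0 x : ℤ))).2]
      · ring
      · push_cast; constructor <;> linarith
    · rw [(Int.floor_eq_iff (z := (valKFrom 0 x : ℤ) + 1)).2]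
      · push_cast; ring
      · push_cast; constructor <;> linarith
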